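/- arXiv:math/9906209 — 2 statements merged into one kernel-verified Lean document; each statement's English description precedes it below -/
import Mathlib

section
/- Let d ≥ 1 and g be integers. There exist nonnegative integers z, y, p satisfying p ≥ 1, y ≤ p, (y = 0 → z = 0), y + p = d, and 2g = (y−1)(y−2) + (p−1)(p−2) + 2y − 2z − 2, if and only if either 2g = (d−1)(d−2), or d ≥ 2 and 2g ≤ (d−2)(d−3). -/
/-- Nonemptiness of the Hilbert scheme `H_{d,g}(2H)`: there exist nonnegative
integers `z, y, p` with `p ≥ 1`, `y ≤ p`, `y = 0 → z = 0`, `y + p = d` and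
`2g = (y-1)(y-2) + (p-1)(p-2) + 2y - 2z - 2` iff either `2g = (d-1)(d-2)`, or
`d ≥ 2` and `2g ≤ (d-2)(d-3)`. -/
theorem stmt0 (d g : ℤ) (hd : 1 ≤ d) :
    (∃ z y p : ℤ, 0 ≤ z ∧ 0 ≤ y ∧ 0 ≤ p ∧ 1 ≤ p ∧ y ≤ p ∧ (y = 0 → z = 0) ∧
      y + p = d ∧ 2 * g = (y - 1) * (y - 2) + (p - 1) * (p - 2) + 2 * y - 2 * z - 2) ↔
    (2 * g = (d - 1) * (d - 2) ∨ (2 ≤ d ∧ 2 * g ≤ (d - 2) * (d - 3))) := by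
  constructor
  · rintro ⟨z, y, p, hz, hy, hp0, hp, hyp, hz0, hsum, heq⟩
    rcases eq_or_lt_of_le hy with h0 | h1
    · left
      have hz' := hz0 h0.symm
      subst hz'
      have : p = d := by linarith
      subst this
      rw [← h0] at heq
      linarith [heq]
    · right
      have hy1 : 1 ≤ y := h1
      constructor
      · linarith
      · have key : 0 ≤ (y - 1) * (p - 2) := by
          rcases eq_or_lt_of_le hy1 with h | h
          · rw [← h]; ring_nf; simp
          · have : 2 ≤ y := h
            have : 2 ≤ p := le_trans this hyp
            nlinarith
        nlinarith [key, hz]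
  · rintro (h | ⟨hd2, hle⟩)
    · exact ⟨0, 0, d, le_refl 0, le_refl 0, by linarith, hd, by linarith, fun _ => rfl,
        by ring, by linarith⟩
    · obtain ⟨k, hk⟩ : Even ((d - 2) * (d - 3)) := by
        rcases Int.even_or_odd d with he | ho
        · obtain ⟨m, hm⟩ := he
          exact ⟨(m - 1) * (d - 3), by rw [hm]; ring⟩
        · obtain ⟨m, hm⟩ := ho
          exact ⟨(d - 2) * (m - 1), by rw [hm]; ring⟩
      refine ⟨k - g, 1, d - 1, by linarith, by norm_num, by linarith, by linarith,
        by linarith, by norm_num, by ring, by nlinarith [hk]⟩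
end

section
/- Let k be a field, let p ≥ 1 and r ≥ 0 be integers, and work in R = k[x,y,z,w]. Let J = (x², x y², x y z^{p−1}, x y w^{r+p−2}, y^{p+2}, y^{p+1} w^{r+p−2} + x z^{r+2p−2}) and I = (x², x y, y^{p+2}, y^{p+1} w^{r+p−2} + x z^{r+2p−2}). Then J ⊆ I, and I is the saturation of J with respect to the irrelevant maximal ideal (x,y,z,w); in particular I is a saturated homogeneous ideal. -/
/-!
Let `K = (x², xy, y^{p+2})` and `g = y^{p+1} w^s + x z^t` with `s = r+p-2`, `t = r+2p-2`.
Modulo `K` the ring is a free `k[z,w]`-module on `1, y, …, y^{p+1}, x`, and `x g, y g ∈ K`,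
so every element of `I` is `h g` modulo `K` with `h ∈ k[z,w]`. If `z f ∈ I`, comparing
coefficients of `y^{p+1}` gives `z ∣ h w^s`, hence `z ∣ h`, and `f ∈ I`: `z` is a
nonzerodivisor on `R / I`, which forces `J : m^n ⊆ I` and `I : m = I`. Conversely `x y` is
killed modulo `J` by `x`, `y`, `z^{p-1}` and `w^{r+p-2}`, hence by a power of `m`, and the
other generators of `I` already lie in `J`.
-/

section Saturation

variable {R : Type*} [CommRing R] {I J m : Ideal R}

lemma Ideal.colon_pow_le_of_mul_mem (hJI : J ≤ I) {z : R} (hz : z ∈ m)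
    (hreg : ∀ f, z * f ∈ I → f ∈ I) (n : ℕ) :
    J.colon ((m ^ n : Ideal R) : Set R) ≤ I := by
  induction n with
  | zero => simpa [Ideal.one_eq_top] using hJI
  | succ n ih =>
    refine fun f hf => hreg f (ih (Submodule.mem_colon.2 fun u hu => ?_))
    rw [smul_eq_mul, mul_assoc, mul_left_comm, ← smul_eq_mul]
    exact Submodule.mem_colon.1 hf _ (pow_succ' m n ▸ Ideal.mul_mem_mul hz hu)

def Ideal.saturation (J m : Ideal R) : Ideal R :=
  ⨆ n : ℕ, J.colon ((m ^ n : Ideal R) : Set R)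

lemma Ideal.le_saturation : J ≤ J.saturation m :=
  fun _ hf => Submodule.mem_iSup_of_mem 0 (Ideal.le_colon hf)

lemma Ideal.saturation_le_of_mul_mem (hJI : J ≤ I) {z : R} (hz : z ∈ m)
    (hreg : ∀ f, z * f ∈ I → f ∈ I) : J.saturation m ≤ I :=
  iSup_le (Ideal.colon_pow_le_of_mul_mem hJI hz hreg)

lemma Ideal.colon_eq_self_of_mul_mem {z : R} (hz : z ∈ m)
    (hreg : ∀ f, z * f ∈ I → f ∈ I) : I.colon (m : Set R) = I :=
  le_antisymm (fun f hf => hreg f (mul_comm f z ▸ Submodule.mem_colon.1 hf z hz)) Ideal.le_colon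

lemma Ideal.mem_saturation_of_le_radical {f : R} (hm : m.FG)
    (h : m ≤ (J.colon {f}).radical) : f ∈ J.saturation m := by
  obtain ⟨n, hn⟩ := Ideal.exists_pow_le_of_le_radical_of_fg h hm
  refine Submodule.mem_iSup_of_mem n (Submodule.mem_colon.2 fun u hu => ?_)
  rw [smul_eq_mul, mul_comm]
  exact Submodule.mem_colon_singleton.1 (hn hu)

end Saturation

open Polynomial in
lemma Polynomial.X_pow_dvd_of_X_pow_dvd_C_mul {B : Type*} [CommRing B] [IsDomain B] {c : B}
    (hc : c ≠ 0) {k : ℕ} {v : B[X]} (h : X ^ k ∣ C c * v) : X ^ k ∣ v :=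
  X_pow_dvd_iff.2 fun d hd => by
    simpa [coeff_C_mul, hc] using X_pow_dvd_iff.1 h d hd

namespace Nollet

open Polynomial

variable {B : Type*} [CommRing B]

-- `B[X][X]` stands for `B[y][x]`: the outer variable `X` is `x` and `C X` is `y`.
noncomputable def monomialIdeal (n : ℕ) : Ideal B[X][X] :=
  Ideal.span {X ^ 2, X * C X, C X ^ (n + 2)}

lemma mem_monomialIdeal_iff {n : ℕ} {u : B[X][X]} :
    u ∈ monomialIdeal n ↔ X ^ (n + 2) ∣ u.coeff 0 ∧ X ∣ u.coeff 1 := by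
  constructor
  · intro hu
    obtain ⟨a₁, v, hv, rfl⟩ := Ideal.mem_span_insert.1 hu
    obtain ⟨a₂, v', hv', rfl⟩ := Ideal.mem_span_insert.1 hv
    obtain ⟨a₃, rfl⟩ := Ideal.mem_span_singleton'.1 hv'
    rw [← C_pow, ← mul_assoc, mul_right_comm a₂]
    simp only [coeff_add, coeff_mul_X_pow', coeff_mul_X_zero, coeff_mul_X, coeff_mul_C]
    simp only [Nat.not_ofNat_le_one, if_false, zero_add, nonpos_iff_eq_zero, OfNat.ofNat_ne_zero]
    exact ⟨dvd_mul_left _ _,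
      dvd_add (dvd_mul_left _ _) ((dvd_pow_self _ (by omega)).mul_left _)⟩
  · rintro ⟨⟨v₀, hv₀⟩, ⟨v₁, hv₁⟩⟩
    obtain ⟨r, hr⟩ : X ^ 2 ∣ u - C (u.coeff 0) - X * C (u.coeff 1) := by
      refine X_pow_dvd_iff.2 fun d hd => ?_
      interval_cases d <;> simp [coeff_C]
    have hu : u = r * X ^ 2 + C v₁ * (X * C X) + C v₀ * C X ^ (n + 2) := by
      rw [hv₀, hv₁] at hr
      rw [C_mul, C_mul, C_pow] at hr
      linear_combination hr
    rw [hu]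
    refine add_mem (add_mem ?_ ?_) ?_ <;> exact Ideal.mul_mem_left _ _ (Ideal.subset_span (by simp))

noncomputable def limitGen (n : ℕ) (a b : B) : B[X][X] :=
  C X ^ (n + 1) * C (C a) + X * C (C b)

noncomputable def limitIdeal (n : ℕ) (a b : B) : Ideal B[X][X] :=
  Ideal.span {X ^ 2, X * C X, C X ^ (n + 2), limitGen n a b}

lemma coeff_limitGen_zero (n : ℕ) (a b : B) : (limitGen n a b).coeff 0 = X ^ (n + 1) * C a := by
  simp [limitGen, ← C_pow, -map_pow]

lemma sub_C_C_mem_span_X_C_X (q : B[X][X]) :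
    q - C (C ((q.coeff 0).coeff 0)) ∈ Ideal.span {X, C X} := by
  obtain ⟨s, hs⟩ := X_dvd_sub_C (p := q)
  obtain ⟨t, ht⟩ := X_dvd_sub_C (p := q.coeff 0)
  have hq : q - C (C ((q.coeff 0).coeff 0)) = s * X + C t * C X := by
    have ht' := congrArg C ht
    rw [map_sub, map_mul] at ht'
    linear_combination hs + ht'
  exact Ideal.mem_span_pair.2 ⟨s, C t, hq.symm⟩

lemma mul_limitGen_mem_monomialIdeal {n : ℕ} {a b : B} {q : B[X][X]}
    (hq : q ∈ Ideal.span {X, C X}) : q * limitGen n a b ∈ monomialIdeal n := by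
  obtain ⟨s, t, rfl⟩ := Ideal.mem_span_pair.1 hq
  have h : (s * X + t * C X) * limitGen n a b
      = (s * C X ^ n * C (C a)) * (X * C X) + (s * C (C b)) * X ^ 2
        + (t * C (C a)) * C X ^ (n + 2) + (t * C (C b)) * (X * C X) := by
    rw [limitGen]; ring
  rw [h]
  refine add_mem (add_mem (add_mem ?_ ?_) ?_) ?_ <;>
    exact Ideal.mul_mem_left _ _ (Ideal.subset_span (by simp))

lemma limitIdeal_eq_sup (n : ℕ) (a b : B) :
    limitIdeal n a b = monomialIdeal n ⊔ Ideal.span {limitGen n a b} := by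
  rw [limitIdeal, monomialIdeal, ← Ideal.span_union]
  congr 1
  ext
  simp only [Set.mem_insert_iff, Set.mem_singleton_iff, Set.mem_union]
  tauto

lemma mem_limitIdeal_iff {n : ℕ} {a b : B} {f : B[X][X]} :
    f ∈ limitIdeal n a b ↔ ∃ h : B, f - C (C h) * limitGen n a b ∈ monomialIdeal n := by
  rw [limitIdeal_eq_sup]
  constructor
  · intro hf
    obtain ⟨k, hk, _, hg, rfl⟩ := Submodule.mem_sup.1 hf
    obtain ⟨q, rfl⟩ := Ideal.mem_span_singleton'.1 hg
    refine ⟨(q.coeff 0).coeff 0, ?_⟩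
    rw [add_sub_assoc, ← sub_mul]
    exact add_mem hk (mul_limitGen_mem_monomialIdeal (sub_C_C_mem_span_X_C_X q))
  · rintro ⟨h, hk⟩
    rw [← sub_add_cancel f (C (C h) * limitGen n a b)]
    exact Submodule.mem_sup.2 ⟨_, hk, _, Ideal.mem_span_singleton'.2 ⟨_, rfl⟩, rfl⟩

section IsDomain

variable [IsDomain B]

lemma mem_monomialIdeal_of_C_C_mul_mem {n : ℕ} {c : B} (hc : c ≠ 0) {u : B[X][X]}
    (h : C (C c) * u ∈ monomialIdeal n) : u ∈ monomialIdeal n := by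
  rw [mem_monomialIdeal_iff, coeff_C_mul, coeff_C_mul] at h
  rw [mem_monomialIdeal_iff]
  exact ⟨X_pow_dvd_of_X_pow_dvd_C_mul hc h.1,
    by simpa using X_pow_dvd_of_X_pow_dvd_C_mul hc (k := 1) (by simpa using h.2)⟩

lemma mem_limitIdeal_of_C_C_mul_mem {n : ℕ} {a b c : B} (hc : Prime c) (ha : ¬c ∣ a)
    {f : B[X][X]} (hf : C (C c) * f ∈ limitIdeal n a b) : f ∈ limitIdeal n a b := by
  obtain ⟨h, hk⟩ := mem_limitIdeal_iff.1 hf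
  have hca : c ∣ h * a := by
    have := X_pow_dvd_iff.1 (mem_monomialIdeal_iff.1 hk).1 (n + 1) (by omega)
    simp [coeff_limitGen_zero, coeff_C] at this
    exact ⟨_, (sub_eq_zero.1 this).symm⟩
  obtain ⟨h', rfl⟩ := (hc.dvd_or_dvd hca).resolve_right ha
  refine mem_limitIdeal_iff.2 ⟨h', mem_monomialIdeal_of_C_C_mul_mem hc.ne_zero ?_⟩
  rwa [mul_sub, ← mul_assoc, ← C_mul, ← C_mul]

end IsDomain

variable (k : Type*) [CommRing k]

noncomputable def splitEquiv : MvPolynomial (Fin 4) k ≃ₐ[k] (MvPolynomial (Fin 2) k)[X][X] :=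
  (MvPolynomial.finSuccEquiv k 3).trans (mapAlgEquiv (MvPolynomial.finSuccEquiv k 2))

variable {k}

lemma splitEquiv_apply (f : MvPolynomial (Fin 4) k) :
    splitEquiv k f = (MvPolynomial.finSuccEquiv k 3 f).map (MvPolynomial.finSuccEquiv k 2) :=
  rfl

lemma splitEquiv_X_zero : splitEquiv k (MvPolynomial.X 0) = X := by
  rw [splitEquiv_apply, MvPolynomial.finSuccEquiv_X_zero, map_X]

lemma splitEquiv_X_one : splitEquiv k (MvPolynomial.X 1) = C X := by
  rw [splitEquiv_apply, show (1 : Fin 4) = Fin.succ 0 from rfl, MvPolynomial.finSuccEquiv_X_succ,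
    map_C, RingHom.coe_coe, MvPolynomial.finSuccEquiv_X_zero]

lemma splitEquiv_X_two : splitEquiv k (MvPolynomial.X 2) = C (C (MvPolynomial.X 0)) := by
  rw [splitEquiv_apply, show (2 : Fin 4) = Fin.succ 1 from rfl, MvPolynomial.finSuccEquiv_X_succ,
    map_C, RingHom.coe_coe, show (1 : Fin 3) = Fin.succ 0 from rfl,
    MvPolynomial.finSuccEquiv_X_succ]

lemma splitEquiv_X_three : splitEquiv k (MvPolynomial.X 3) = C (C (MvPolynomial.X 1)) := by
  rw [splitEquiv_apply, show (3 : Fin 4) = Fin.succ 2 from rfl, MvPolynomial.finSuccEquiv_X_succ,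
    map_C, RingHom.coe_coe, show (2 : Fin 3) = Fin.succ 1 from rfl,
    MvPolynomial.finSuccEquiv_X_succ]

lemma comap_splitEquiv_limitIdeal (p s t : ℕ) :
    (limitIdeal p (MvPolynomial.X 1 ^ s) (MvPolynomial.X 0 ^ t)).comap (splitEquiv k) =
      Ideal.span {MvPolynomial.X 0 ^ 2, MvPolynomial.X 0 * MvPolynomial.X 1,
        MvPolynomial.X 1 ^ (p + 2),
        MvPolynomial.X 1 ^ (p + 1) * MvPolynomial.X 3 ^ s +
          MvPolynomial.X 0 * MvPolynomial.X 2 ^ t} := by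
  refine Eq.trans ?_ (Ideal.comap_map_of_bijective _ (splitEquiv k).bijective)
  rw [Ideal.map_span]
  congr 2
  simp [Set.image_insert_eq, splitEquiv_X_zero, splitEquiv_X_one, splitEquiv_X_two,
    splitEquiv_X_three, limitIdeal, limitGen]

lemma X_two_mul_mem_comap_splitEquiv_limitIdeal [IsDomain k] {p s t : ℕ}
    {f : MvPolynomial (Fin 4) k}
    (hf : MvPolynomial.X 2 * f ∈
      (limitIdeal p (MvPolynomial.X 1 ^ s) (MvPolynomial.X 0 ^ t)).comap (splitEquiv k)) :
    f ∈ (limitIdeal p (MvPolynomial.X 1 ^ s) (MvPolynomial.X 0 ^ t)).comap (splitEquiv k) := by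
  rw [Ideal.mem_comap, map_mul, splitEquiv_X_two] at hf
  refine mem_limitIdeal_of_C_C_mul_mem MvPolynomial.X_prime (fun h => ?_) hf
  have := MvPolynomial.X_prime.dvd_of_dvd_pow h
  rw [MvPolynomial.X_dvd_X] at this
  exact absurd this (by decide)

end Nollet

open MvPolynomial

theorem stmt13_general (k : Type*) [Field k] (p r : ℕ) :
    let x : MvPolynomial (Fin 4) k := X 0
    let y : MvPolynomial (Fin 4) k := X 1
    let z : MvPolynomial (Fin 4) k := X 2
    let w : MvPolynomial (Fin 4) k := X 3
    let m : Ideal (MvPolynomial (Fin 4) k) := Ideal.span {x, y, z, w}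
    let J : Ideal (MvPolynomial (Fin 4) k) := Ideal.span
      {x ^ 2, x * y ^ 2, x * y * z ^ (p - 1), x * y * w ^ (r + p - 2), y ^ (p + 2),
        y ^ (p + 1) * w ^ (r + p - 2) + x * z ^ (r + 2 * p - 2)}
    let I : Ideal (MvPolynomial (Fin 4) k) := Ideal.span
      {x ^ 2, x * y, y ^ (p + 2), y ^ (p + 1) * w ^ (r + p - 2) + x * z ^ (r + 2 * p - 2)}
    J ≤ I ∧ I = ⨆ n : ℕ, J.colon ((m ^ n : Ideal (MvPolynomial (Fin 4) k)) : Set (MvPolynomial (Fin 4) k)) ∧ I.colon m = I := by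
  intro x y z w m J I
  have hz : z ∈ m := Ideal.subset_span (by simp)
  have hreg : ∀ f, z * f ∈ I → f ∈ I := by
    rw [show I = _ from (Nollet.comap_splitEquiv_limitIdeal p (r + p - 2) (r + 2 * p - 2)).symm]
    exact fun f => Nollet.X_two_mul_mem_comap_splitEquiv_limitIdeal
  have hJI : J ≤ I := by
    have hxyI : x * y ∈ I := Ideal.subset_span (by simp)
    refine Ideal.span_le.2 ?_
    rintro v (rfl | rfl | rfl | rfl | rfl | rfl)
    · exact Ideal.subset_span (by simp)
    · exact (show x * y * y = x * y ^ 2 by ring) ▸ I.mul_mem_right y hxyI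
    · exact I.mul_mem_right _ hxyI
    · exact I.mul_mem_right _ hxyI
    · exact Ideal.subset_span (by simp)
    · exact Ideal.subset_span (by simp)
  have hxy : x * y ∈ J.saturation m := by
    have hrad : ∀ v e, v ^ e * (x * y) ∈ J → v ∈ (J.colon {x * y}).radical :=
      fun v e h => ⟨e, Submodule.mem_colon_singleton.2 h⟩
    refine Ideal.mem_saturation_of_le_radical (Submodule.fg_span (Set.toFinite _))
      (Ideal.span_le.2 ?_)
    rintro v (rfl | rfl | rfl | rfl)
    · exact hrad x 1 ((show x ^ 2 * y = x ^ 1 * (x * y) by ring) ▸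
        J.mul_mem_right y (Ideal.subset_span (by simp)))
    · exact hrad y 1 ((show x * y ^ 2 = y ^ 1 * (x * y) by ring) ▸ Ideal.subset_span (by simp))
    · exact hrad z (p - 1) (mul_comm (x * y) _ ▸ Ideal.subset_span (by simp))
    · exact hrad w (r + p - 2) (mul_comm (x * y) _ ▸ Ideal.subset_span (by simp))
  refine ⟨hJI, le_antisymm (Ideal.span_le.2 ?_) (Ideal.saturation_le_of_mul_mem hJI hz hreg),
    Ideal.colon_eq_self_of_mul_mem hz hreg⟩
  rintro v (rfl | rfl | rfl | rfl)
  exacts [Ideal.le_saturation (Ideal.subset_span (by simp)), hxy,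
    Ideal.le_saturation (Ideal.subset_span (by simp)),
    Ideal.le_saturation (Ideal.subset_span (by simp))]

/-- Nollet's ideal computation: `J ⊆ I`, and `I` is the saturation of `J` with respect
to the irrelevant maximal ideal `(x,y,z,w)`; in particular `I` is saturated. -/
theorem stmt13 (k : Type*) [Field k] (p r : ℕ) (hp : 1 ≤ p) :
    let x : MvPolynomial (Fin 4) k := X 0
    let y : MvPolynomial (Fin 4) k := X 1
    let z : MvPolynomial (Fin 4) k := X 2
    let w : MvPolynomial (Fin 4) k := X 3
    let m : Ideal (MvPolynomial (Fin 4) k) := Ideal.span {x, y, z, w}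
    let J : Ideal (MvPolynomial (Fin 4) k) := Ideal.span
      {x ^ 2, x * y ^ 2, x * y * z ^ (p - 1), x * y * w ^ (r + p - 2), y ^ (p + 2),
        y ^ (p + 1) * w ^ (r + p - 2) + x * z ^ (r + 2 * p - 2)}
    let I : Ideal (MvPolynomial (Fin 4) k) := Ideal.span
      {x ^ 2, x * y, y ^ (p + 2), y ^ (p + 1) * w ^ (r + p - 2) + x * z ^ (r + 2 * p - 2)}
    J ≤ I ∧ I = ⨆ n : ℕ, J.colon ((m ^ n : Ideal (MvPolynomial (Fin 4) k)) : Set (MvPolynomial (Fin 4) k)) ∧ I.colon m = I :=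
  stmt13_general k p r
end
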